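/- arXiv:1505.00417 — 2 statements merged into one kernel-verified Lean document; each statement's English description precedes it below -/
import Mathlib

section
/- Let q be a nondegenerate quadratic form on ℂ³ (i.e. its associated symmetric bilinear form is nondegenerate). Then for every nonzero z ∈ ℂ³ there exists a nonzero v ∈ ℂ³ with q(v) = 0 and polar(q)(v, z) = 0; that is, the projective point determined by z lies on the tangent line of the conic {q = 0} at the point determined by v. In other words, the tangent lines of a nondegenerate conic in ℂP² sweep out all of ℂP². -/
lemma exists_quad_root (a b c : ℂ) (ha : a ≠ 0) : ∃ t : ℂ, a * t ^ 2 + b * t + c = 0 := by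
  classical
  set P : Polynomial ℂ := Polynomial.C a * Polynomial.X ^ 2 + Polynomial.C b * Polynomial.X +
    Polynomial.C c with hP
  have hdeg : P.degree = 2 := by
    rw [hP]; compute_degree!
  obtain ⟨t, ht⟩ := Complex.exists_root (hdeg ▸ (by norm_num : (0:WithBot ℕ) < 2))
  refine ⟨t, ?_⟩
  have := ht
  simp only [Polynomial.IsRoot, hP, Polynomial.eval_add, Polynomial.eval_mul,
    Polynomial.eval_pow, Polynomial.eval_C, Polynomial.eval_X] at this
  linear_combination this

/-- Tangent lines of a nondegenerate conic in `ℂP²` sweep out the whole plane: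
for a quadratic form `q` on `ℂ³` with nondegenerate polar form and any nonzero
`z`, there is a nonzero `v` with `q v = 0` and `polar q v z = 0`, i.e. `[z]`
lies on the tangent line of the conic `{q = 0}` at `[v]`. -/
theorem stmt6 (q : QuadraticForm ℂ (Fin 3 → ℂ))
    (hq : q.polarBilin.Nondegenerate) :
    ∀ z : Fin 3 → ℂ, z ≠ 0 →
      ∃ v : Fin 3 → ℂ, v ≠ 0 ∧ q v = 0 ∧ QuadraticMap.polar q v z = 0 := by
  intro z hz
  classical
  set f : (Fin 3 → ℂ) →ₗ[ℂ] ℂ := q.polarBilin.flip z with hf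
  have hfv : ∀ v, f v = QuadraticMap.polar q v z := fun v => rfl
  set W := LinearMap.ker f with hW
  -- finrank W ≥ 2
  have hrank : Module.finrank ℂ (LinearMap.range f) ≤ 1 := by
    simpa using Submodule.finrank_le (LinearMap.range f)
  have hrn := LinearMap.finrank_range_add_finrank_ker f
  have hdim : 2 ≤ Module.finrank ℂ W := by
    rw [hW]
    have : Module.finrank ℂ (Fin 3 → ℂ) = 3 := by simp
    omega
  -- get two independent vectors in W
  have : Nontrivial W := by
    apply Module.nontrivial_of_finrank_pos (R := ℂ)
    omega
  let b := Module.finBasis ℂ W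
  have hn : 2 ≤ Module.finrank ℂ W := hdim
  let i0 : Fin (Module.finrank ℂ W) := ⟨0, by omega⟩
  let i1 : Fin (Module.finrank ℂ W) := ⟨1, by omega⟩
  have hi01 : i0 ≠ i1 := by simp [i0, i1, Fin.ext_iff]
  set w1 : Fin 3 → ℂ := (b i0 : Fin 3 → ℂ) with hw1
  set w2 : Fin 3 → ℂ := (b i1 : Fin 3 → ℂ) with hw2
  have hfw1 : f w1 = 0 := (b i0).2
  have hfw2 : f w2 = 0 := (b i1).2
  have hindep : ∀ s t : ℂ, s • w1 + t • w2 = 0 → s = 0 ∧ t = 0 := by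
    intro s t h
    have hW0 : s • b i0 + t • b i1 = 0 := by
      apply Subtype.ext
      simpa [w1, w2] using h
    have := Fintype.linearIndependent_iff.mp b.linearIndependent
      (fun i => if i = i0 then s else if i = i1 then t else 0) ?_
    · constructor
      · simpa using this i0
      · have := this i1
        simpa [hi01, (Ne.symm hi01)] using this
    · rw [← hW0]
      rw [Finset.sum_eq_add_of_mem i0 i1 (Finset.mem_univ _) (Finset.mem_univ _) hi01 ?_]
      · simp [hi01, Ne.symm hi01]
      · intro c _ hc
        simp [hc.1, hc.2]
  have hw2ne : w2 ≠ 0 := by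
    intro h
    have := hindep 0 1 (by simp [h])
    exact one_ne_zero this.2
  by_cases h2 : q w2 = 0
  · exact ⟨w2, hw2ne, h2, by rw [← hfv]; exact hfw2⟩
  · obtain ⟨t, ht⟩ := exists_quad_root (q w2) (QuadraticMap.polar q w1 w2) (q w1) h2
    refine ⟨w1 + t • w2, ?_, ?_, ?_⟩
    · intro h
      have := hindep 1 t (by simpa using h)
      exact one_ne_zero this.1
    · have : q (w1 + t • w2) = q w1 + QuadraticMap.polar q w1 (t • w2) + q (t • w2) := by
        rw [QuadraticMap.polar]; ring
      rw [this, QuadraticMap.polar_smul_right, QuadraticMap.map_smul]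
      simp only [smul_eq_mul]
      linear_combination ht
    · rw [← hfv]
      simp [map_add, map_smul, hfw1, hfw2]
end

section
/- Let f, g ∈ ℂ[x₀,x₁,x₂] be homogeneous polynomials of degrees m ≥ 1 and n ≥ 1 respectively. Then f and g have a common nontrivial zero: there exists v ∈ ℂ³ with v ≠ 0, f(v) = 0 and g(v) = 0. In particular, any two plane curves in ℂP² intersect; e.g. two conics meet, and a line meets a conic. -/
/-!
If `f` and `g` had no common zero other than `0`, the Nullstellensatz would put a power of every
variable into `I = (f, g)`, hence the whole space `S_e` of forms of degree `e` into `I` for `e`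
large. Then `(a, b) ↦ a f + b g` maps `S_{e-m} × S_{e-n}` onto `S_e`, and its kernel contains the
Koszul syzygies `(c g, -c f)`, `c ∈ S_{e-m-n}`, so
`dim S_e + dim S_{e-m-n} ≤ dim S_{e-m} + dim S_{e-n}`. In three variables
`dim S_e = (e+2).choose 2`, and the left side exceeds the right one by `m n > 0`.
-/

open MvPolynomial Module

section
variable {σ R : Type*} [CommSemiring R]

lemma homogeneousComponent_add_mul_of_mem {f : MvPolynomial σ R} {m : ℕ}
    (hf : f ∈ homogeneousSubmodule σ R m) (a : MvPolynomial σ R) (i : ℕ) :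
    homogeneousComponent (i + m) (a * f) = homogeneousComponent i a * f := by
  let _ := gradedAlgebra (σ := σ) (R := R)
  simp only [← decomposition.decompose'_apply]
  exact DirectSum.coe_decompose_mul_add_of_right_mem (homogeneousSubmodule σ R) hf

lemma mul_mem_homogeneousSubmodule {a b : MvPolynomial σ R} {i j k : ℕ}
    (ha : a ∈ homogeneousSubmodule σ R i) (hb : b ∈ homogeneousSubmodule σ R j) (h : i + j = k) :
    a * b ∈ homogeneousSubmodule σ R k :=
  h ▸ homogeneousSubmodule_mul i j (Submodule.mul_mem_mul ha hb)

lemma exists_homogeneous_of_mem_span_pair {f g p : MvPolynomial σ R} {m n i j e : ℕ}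
    (hf : f ∈ homogeneousSubmodule σ R m) (hg : g ∈ homogeneousSubmodule σ R n)
    (hp : p ∈ homogeneousSubmodule σ R e) (hi : i + m = e) (hj : j + n = e)
    (hpI : p ∈ Ideal.span {f, g}) :
    ∃ a ∈ homogeneousSubmodule σ R i, ∃ b ∈ homogeneousSubmodule σ R j, a * f + b * g = p := by
  obtain ⟨a, b, rfl⟩ := Ideal.mem_span_pair.mp hpI
  refine ⟨_, homogeneousComponent_mem i a, _, homogeneousComponent_mem j b, ?_⟩
  rw [← homogeneousComponent_add_mul_of_mem hf, ← homogeneousComponent_add_mul_of_mem hg, hi, hj,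
    ← map_add, homogeneousComponent_of_mem hp, if_pos rfl]

variable [Fintype σ]

lemma monomial_mem_of_X_pow_mem {I : Ideal (MvPolynomial σ R)} {N : ℕ}
    (hX : ∀ i, X i ^ N ∈ I) {u : σ →₀ ℕ} (hu : Fintype.card σ * (N - 1) < u.degree) (c : R) :
    monomial u c ∈ I := by
  obtain ⟨i, -, hi⟩ : ∃ i ∈ Finset.univ, N - 1 < u i := by
    apply Finset.exists_lt_of_sum_lt
    simpa [Finsupp.degree_eq_sum] using hu
  refine Ideal.mem_of_dvd _ ?_ (hX i)
  rw [X_pow_eq_monomial, monomial_dvd_monomial, Finsupp.single_le_iff]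
  exact ⟨.inr (by omega), one_dvd c⟩

lemma exists_homogeneousSubmodule_subset_of_X_mem_radical {I : Ideal (MvPolynomial σ R)}
    (hX : ∀ i, X i ∈ I.radical) :
    ∃ D, ∀ e ≥ D, (homogeneousSubmodule σ R e : Set (MvPolynomial σ R)) ⊆ I := by
  choose N hN using hX
  refine ⟨Fintype.card σ * (Finset.univ.sup N - 1) + 1, fun e he p hp => ?_⟩
  rw [p.as_sum]
  refine Ideal.sum_mem _ fun u hu => monomial_mem_of_X_pow_mem
    (fun i => I.pow_mem_of_pow_mem (hN i) (Finset.le_sup (Finset.mem_univ i))) ?_ _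
  rw [Finsupp.degree_apply, ← IsHomogeneous.degree_eq_sum_deg_support hp hu]
  omega

end

section
variable {σ K : Type*} [Field K]

lemma homogeneousSubmodule_eq_restrictSupport_finsuppAntidiag [Fintype σ] [DecidableEq σ]
    (e : ℕ) :
    homogeneousSubmodule σ K e =
      restrictSupport K ((Finset.univ : Finset σ).finsuppAntidiag e : Set (σ →₀ ℕ)) := by
  rw [homogeneousSubmodule_eq_finsupp_supported]
  congr 1
  ext d
  simp [Finsupp.degree_eq_sum]

instance [Finite σ] (e : ℕ) : FiniteDimensional K (homogeneousSubmodule σ K e) := by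
  classical
  have := Fintype.ofFinite σ
  rw [homogeneousSubmodule_eq_restrictSupport_finsuppAntidiag]
  exact .of_basis (basisRestrictSupport K _)

lemma finrank_homogeneousSubmodule [Fintype σ] (e : ℕ) :
    finrank K (homogeneousSubmodule σ K e) = (Fintype.card σ + e - 1).choose e := by
  classical
  rw [homogeneousSubmodule_eq_restrictSupport_finsuppAntidiag,
    finrank_eq_card_basis (basisRestrictSupport K _)]
  simp [Finset.card_finsuppAntidiag_nat_eq_choose]

lemma finrank_homogeneousSubmodule_fin_three (e : ℕ) :
    finrank K (homogeneousSubmodule (Fin 3) K e) = (e + 2).choose 2 := by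
  rw [finrank_homogeneousSubmodule, Fintype.card_fin, show 3 + e - 1 = e + 2 by omega,
    Nat.choose_symm_add]

end

lemma LinearMap.finrank_add_finrank_le_of_comp_eq_zero {K U V W : Type*} [Field K]
    [AddCommGroup U] [AddCommGroup V] [AddCommGroup W] [Module K U] [Module K V] [Module K W]
    [FiniteDimensional K V] {ψ : U →ₗ[K] V} {φ : V →ₗ[K] W}
    (hψ : Function.Injective ψ) (hφ : Function.Surjective φ) (h : φ ∘ₗ ψ = 0) :
    finrank K U + finrank K W ≤ finrank K V := by
  have hU := LinearMap.finrank_range_of_inj hψ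
  have hker := Submodule.finrank_mono (LinearMap.range_le_ker_iff.mpr h)
  have := φ.finrank_range_add_finrank_ker
  rw [LinearMap.range_eq_top.mpr hφ, finrank_top] at this
  omega

lemma Nat.choose_two_add_choose_two_eq (m n k : ℕ) :
    (m + n + k + 2).choose 2 + (k + 2).choose 2 =
      (n + k + 2).choose 2 + (m + k + 2).choose 2 + m * n := by
  have h (e : ℕ) : ((e + 2).choose 2 : ℚ) = (e + 2) * (e + 1) / 2 := by
    rw [Nat.cast_choose_two]; push_cast; ring
  qify
  rw [h, h, h, h]
  push_cast
  ring

lemma not_homogeneousSubmodule_subset_span_pair {K : Type*} [Field K]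
    {f g : MvPolynomial (Fin 3) K} {m n : ℕ} (hm : 1 ≤ m) (hn : 1 ≤ n)
    (hf : f ∈ homogeneousSubmodule (Fin 3) K m) (hg : g ∈ homogeneousSubmodule (Fin 3) K n)
    (hfg : f ≠ 0 ∨ g ≠ 0) (k : ℕ) :
    ¬ (homogeneousSubmodule (Fin 3) K (m + n + k) : Set (MvPolynomial (Fin 3) K)) ⊆
      Ideal.span {f, g} := by
  intro hsub
  let φ : homogeneousSubmodule (Fin 3) K (n + k) × homogeneousSubmodule (Fin 3) K (m + k) →ₗ[K]
      homogeneousSubmodule (Fin 3) K (m + n + k) :=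
    ((LinearMap.mulRight K f).restrict fun a ha =>
      mul_mem_homogeneousSubmodule ha hf (by ring)).coprod
    ((LinearMap.mulRight K g).restrict fun b hb => mul_mem_homogeneousSubmodule hb hg (by ring))
  let ψ : homogeneousSubmodule (Fin 3) K k →ₗ[K]
      homogeneousSubmodule (Fin 3) K (n + k) × homogeneousSubmodule (Fin 3) K (m + k) :=
    ((LinearMap.mulRight K g).restrict fun c hc =>
      mul_mem_homogeneousSubmodule hc hg (by ring)).prod
    (-(LinearMap.mulRight K f).restrict fun c hc => mul_mem_homogeneousSubmodule hc hf (by ring))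
  have hφ : Function.Surjective φ := by
    rintro ⟨p, hp⟩
    obtain ⟨a, ha, b, hb, rfl⟩ := exists_homogeneous_of_mem_span_pair (i := n + k) (j := m + k)
      hf hg hp (by ring) (by ring) (hsub hp)
    exact ⟨(⟨a, ha⟩, ⟨b, hb⟩), rfl⟩
  have hψ : Function.Injective ψ := by
    refine (injective_iff_map_eq_zero ψ).mpr fun c hc => Subtype.ext ?_
    have hcg : (c : MvPolynomial (Fin 3) K) * g = 0 :=
      congrArg (fun x => (x.1 : MvPolynomial (Fin 3) K)) hc
    have hcf : (c : MvPolynomial (Fin 3) K) * f = 0 :=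
      neg_eq_zero.mp (congrArg (fun x => (x.2 : MvPolynomial (Fin 3) K)) hc)
    rcases hfg with hf0 | hg0
    · exact (mul_eq_zero.mp hcf).resolve_right hf0
    · exact (mul_eq_zero.mp hcg).resolve_right hg0
  have hφψ : φ ∘ₗ ψ = 0 := LinearMap.ext fun c => Subtype.ext <| by
    change (c : MvPolynomial (Fin 3) K) * g * f + -((c : MvPolynomial (Fin 3) K) * f) * g = 0
    ring
  have hdim := LinearMap.finrank_add_finrank_le_of_comp_eq_zero hψ hφ hφψ
  simp only [finrank_prod, finrank_homogeneousSubmodule_fin_three] at hdim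
  nlinarith [Nat.choose_two_add_choose_two_eq m n k]

/-- Two plane curves in `ℂP²` always intersect: homogeneous polynomials
`f, g ∈ ℂ[x₀,x₁,x₂]` of positive degrees have a common nontrivial zero. -/
theorem stmt7 (f g : MvPolynomial (Fin 3) ℂ) (m n : ℕ) (hm : 1 ≤ m) (hn : 1 ≤ n)
    (hf : f ∈ MvPolynomial.homogeneousSubmodule (Fin 3) ℂ m)
    (hg : g ∈ MvPolynomial.homogeneousSubmodule (Fin 3) ℂ n) :
    ∃ v : Fin 3 → ℂ, v ≠ 0 ∧ MvPolynomial.eval v f = 0 ∧ MvPolynomial.eval v g = 0 := by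
  by_cases hfg : f = 0 ∧ g = 0
  · exact ⟨Pi.single 0 1, by simp, by simp [hfg.1], by simp [hfg.2]⟩
  by_contra! hcon
  have hX (i : Fin 3) : X i ∈ (Ideal.span {f, g}).radical := by
    rw [← vanishingIdeal_zeroLocus_eq_radical (K := ℂ)]
    intro x hx
    obtain rfl : x = 0 := by
      by_contra hx0
      exact hcon x hx0 (hx f (Ideal.subset_span (by simp))) (hx g (Ideal.subset_span (by simp)))
    simp
  obtain ⟨D, hD⟩ := exists_homogeneousSubmodule_subset_of_X_mem_radical hX
  exact not_homogeneousSubmodule_subset_span_pair hm hn hf hg (not_and_or.mp hfg) D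
    (hD _ (by omega))
end
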